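/- Let (θ, x) ↦ f_{θ,j}(x) be a jointly smooth family of vector fields on ℝ^p for j = 1,…,d, and fix θ* ∈ Θ and k ∈ {1,…,d}. Assume that E_{θ*}[A_{θ*}(∂_{θ_k} f_{θ,j}|_{θ=θ*})] = 0 and that x ↦ ∂_{θ_k}(A_θ f_{θ,j})(x)|_{θ=θ*} and x ↦ ⟨f_{θ*,j}(x), ∇_x ∂_{θ_k} log q_{θ*}(x)⟩ are q_{θ*}-integrable. Then E_{θ*}[∂_{θ_k}(A_θ f_{θ,j})|_{θ=θ*}] = E_{θ*}[⟨f_{θ*,j}, ∇_x ∂_{θ_k} log q_{θ*}⟩]. In particular, taking f_{θ,j} = ∇_x ∂_{θ_j} log q_θ, the matrix G with entries G_{jk} := E_{θ*}[∂_{θ_k} A_θ(∇_x ∂_{θ_j} log q_θ)|_{θ=θ*}] satisfies G_{jk} = E_{θ*}[⟨∇_x ∂_{θ_j} log q_{θ*}, ∇_x ∂_{θ_k} log q_{θ*}⟩], i.e. G is the Gram matrix of the gradients of the Fisher score functions. -/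

import Mathlib

open MeasureTheory Real Filter

/-- Partial derivative in the `i`-th coordinate. -/
noncomputable def pdv {n : ℕ} (i : Fin n) (f : (Fin n → ℝ) → ℝ) (x : Fin n → ℝ) : ℝ :=
  deriv (fun t => f (Function.update x i t)) (x i)

/-- Gradient of a scalar function on ℝ^n. -/
noncomputable def gradv {n : ℕ} (f : (Fin n → ℝ) → ℝ) (x : Fin n → ℝ) : Fin n → ℝ :=
  fun i => pdv i f x

/-- Divergence of a vector field on ℝ^n. -/
noncomputable def divv {n : ℕ} (f : (Fin n → ℝ) → (Fin n → ℝ)) (x : Fin n → ℝ) : ℝ :=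
  ∑ i, pdv i (fun y => f y i) x

/-- Divergence-based Stein operator `A_q f = div(q f) / q`. -/
noncomputable def stein {n : ℕ} (q : (Fin n → ℝ) → ℝ) (f : (Fin n → ℝ) → (Fin n → ℝ))
    (x : Fin n → ℝ) : ℝ :=
  divv (fun y i => q y * f y i) x / q x

/-- Gradient (in x) of the `j`-th Fisher score function `∂_{θ_j} log q_θ`. -/
noncomputable def scoreGrad {d p : ℕ} (q : (Fin d → ℝ) → (Fin p → ℝ) → ℝ)
    (θ : Fin d → ℝ) (j : Fin d) (x : Fin p → ℝ) : Fin p → ℝ :=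
  gradv (fun z => pdv j (fun θ' => Real.log (q θ' z)) θ) x

section Aux
variable {E : Type*} [NormedAddCommGroup E] [NormedSpace ℝ E]

-- [Dv_* lemmas and core as in t4]

lemma Dv_mul {c d : E → ℝ} {x : E} (hc : DifferentiableAt ℝ c x) (hd : DifferentiableAt ℝ d x)
    (v : E) : fderiv ℝ (fun y => c y * d y) x v
      = fderiv ℝ c x v * d x + c x * fderiv ℝ d x v := by
  rw [fderiv_fun_mul hc hd]; simp; ring

lemma Dv_add {c d : E → ℝ} {x : E} (hc : DifferentiableAt ℝ c x) (hd : DifferentiableAt ℝ d x)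
    (v : E) : fderiv ℝ (fun y => c y + d y) x v = fderiv ℝ c x v + fderiv ℝ d x v := by
  rw [fderiv_fun_add hc hd]; simp

lemma Dv_div {c d : E → ℝ} {x : E} (hc : DifferentiableAt ℝ c x) (hd : DifferentiableAt ℝ d x)
    (hx : d x ≠ 0) (v : E) : fderiv ℝ (fun y => c y / d y) x v
      = (fderiv ℝ c x v * d x - c x * fderiv ℝ d x v) / d x ^ 2 := by
  have hinv : HasFDerivAt (fun y => (d y)⁻¹) ((-(d x ^ 2)⁻¹) • fderiv ℝ d x) x :=
    (hasDerivAt_inv hx).comp_hasFDerivAt x hd.hasFDerivAt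
  have hm := hc.hasFDerivAt.mul' hinv
  have heq : fderiv ℝ (fun y => c y / d y) x
      = c x • ((-(d x ^ 2)⁻¹) • fderiv ℝ d x) + (fderiv ℝ c x).smulRight (d x)⁻¹ := by
    simp only [div_eq_mul_inv]
    exact hm.fderiv
  rw [heq]
  simp only [ContinuousLinearMap.add_apply, ContinuousLinearMap.smul_apply,
    ContinuousLinearMap.smulRight_apply, smul_eq_mul]
  field_simp
  ring

lemma Dv_log {d : E → ℝ} {x : E} (hd : DifferentiableAt ℝ d x) (hx : d x ≠ 0) (v : E) :
    fderiv ℝ (fun y => Real.log (d y)) x v = fderiv ℝ d x v / d x := by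
  rw [(hd.hasFDerivAt.log hx).fderiv]
  simp [div_eq_inv_mul]

lemma Dv_sum {ι : Type*} (s : Finset ι) {A : ι → E → ℝ} {x : E}
    (h : ∀ i ∈ s, DifferentiableAt ℝ (A i) x) (v : E) :
    fderiv ℝ (fun y => ∑ i ∈ s, A i y) x v = ∑ i ∈ s, fderiv ℝ (A i) x v := by
  rw [fderiv_fun_sum h]; simp

lemma Dv_smooth {Φ : E → ℝ} (hΦ : ContDiff ℝ (⊤ : ℕ∞) Φ) (v : E) :
    ContDiff ℝ (⊤ : ℕ∞) (fun y => fderiv ℝ Φ y v) :=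
  (hΦ.fderiv_right (by simp)).clm_apply contDiff_const

lemma Dv_swap {Φ : E → ℝ} (hΦ : ContDiff ℝ (⊤ : ℕ∞) Φ) (x v w : E) :
    fderiv ℝ (fun y => fderiv ℝ Φ y v) x w = fderiv ℝ (fun y => fderiv ℝ Φ y w) x v := by
  have hd : DifferentiableAt ℝ (fderiv ℝ Φ) x :=
    ((hΦ.fderiv_right (m := (⊤ : ℕ∞)) (by simp)).differentiable (by simp)).differentiableAt
  have h1 : ∀ u z : E, fderiv ℝ (fun y => fderiv ℝ Φ y u) x z
      = fderiv ℝ (fderiv ℝ Φ) x z u := by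
    intro u z
    rw [fderiv_clm_apply hd (differentiableAt_const u)]
    simp
  rw [h1, h1]
  exact (hΦ.contDiffAt.isSymmSndFDerivAt (by rw [minSmoothness_of_isRCLikeNormedField]; exact WithTop.coe_le_coe.2 le_top)) w v

lemma core {p : ℕ} (Q : E → ℝ) (F : Fin p → E → ℝ) (hQ : ContDiff ℝ (⊤ : ℕ∞) Q)
    (hF : ∀ i, ContDiff ℝ (⊤ : ℕ∞) (F i)) (hQ0 : ∀ pr, Q pr ≠ 0) (pr0 : E) (u : E) (e : Fin p → E) :
    fderiv ℝ (fun pr => (∑ i, fderiv ℝ (fun pr' => Q pr' * F i pr') pr (e i)) / Q pr) pr0 u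
      = (∑ i, fderiv ℝ (fun pr => Q pr * fderiv ℝ (F i) pr u) pr0 (e i)) / Q pr0
        + ∑ i, F i pr0 *
            fderiv ℝ (fun pr => fderiv ℝ (fun pr' => Real.log (Q pr')) pr u) pr0 (e i) := by
  have dQ : ∀ z, DifferentiableAt ℝ Q z := fun z => (hQ.differentiable (by simp)).differentiableAt
  have dF : ∀ i z, DifferentiableAt ℝ (F i) z :=
    fun i z => ((hF i).differentiable (by simp)).differentiableAt
  have hQF : ∀ i, ContDiff ℝ (⊤ : ℕ∞) (fun pr => Q pr * F i pr) := fun i => hQ.mul (hF i)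
  have hNdiff : DifferentiableAt ℝ
      (fun pr => ∑ i, fderiv ℝ (fun pr' => Q pr' * F i pr') pr (e i)) pr0 :=
    (((ContDiff.sum (fun i _ => Dv_smooth (hQF i) (e i))).differentiable (by simp))).differentiableAt
  -- quotient rule
  rw [Dv_div hNdiff (dQ pr0) (hQ0 pr0) u]
  -- derivative of numerator: sum, then swap, then product rules
  rw [Dv_sum Finset.univ (fun i _ => ((Dv_smooth (hQF i) (e i)).differentiable (by simp)).differentiableAt) u]
  have hswap : ∀ i : Fin p, fderiv ℝ (fun pr => fderiv ℝ (fun pr' => Q pr' * F i pr') pr (e i)) pr0 u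
      = fderiv ℝ (fun pr => fderiv ℝ (fun pr' => Q pr' * F i pr') pr u) pr0 (e i) :=
    fun i => Dv_swap (hQF i) pr0 (e i) u
  simp only [hswap]
  have hmul : ∀ i : Fin p, (fun pr => fderiv ℝ (fun pr' => Q pr' * F i pr') pr u)
      = fun pr => fderiv ℝ Q pr u * F i pr + Q pr * fderiv ℝ (F i) pr u :=
    fun i => funext fun pr => Dv_mul (dQ pr) (dF i pr) u
  simp only [hmul]
  have hsplit : ∀ i : Fin p,
      fderiv ℝ (fun pr => fderiv ℝ Q pr u * F i pr + Q pr * fderiv ℝ (F i) pr u) pr0 (e i)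
      = (fderiv ℝ (fun pr => fderiv ℝ Q pr u) pr0 (e i) * F i pr0
          + fderiv ℝ Q pr0 u * fderiv ℝ (F i) pr0 (e i))
        + fderiv ℝ (fun pr => Q pr * fderiv ℝ (F i) pr u) pr0 (e i) := by
    intro i
    rw [Dv_add (((Dv_smooth hQ u).mul (hF i)).differentiable (by simp)).differentiableAt
          ((hQ.mul (Dv_smooth (hF i) u)).differentiable (by simp)).differentiableAt (e i),
        Dv_mul ((Dv_smooth hQ u).differentiable (by simp)).differentiableAt (dF i pr0) (e i)]
  simp only [hsplit]
  -- value of numerator at pr0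
  have hN0 : (∑ i, fderiv ℝ (fun pr' => Q pr' * F i pr') pr0 (e i))
      = ∑ i, (fderiv ℝ Q pr0 (e i) * F i pr0 + Q pr0 * fderiv ℝ (F i) pr0 (e i)) :=
    Finset.sum_congr rfl fun i _ => Dv_mul (dQ pr0) (dF i pr0) (e i)
  rw [hN0]
  -- score term
  have hlogf : (fun pr => fderiv ℝ (fun pr' => Real.log (Q pr')) pr u)
      = fun pr => fderiv ℝ Q pr u / Q pr :=
    funext fun pr => Dv_log (dQ pr) (hQ0 pr) u
  have hscore : ∀ i : Fin p,
      fderiv ℝ (fun pr => fderiv ℝ (fun pr' => Real.log (Q pr')) pr u) pr0 (e i)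
      = (fderiv ℝ (fun pr => fderiv ℝ Q pr u) pr0 (e i) * Q pr0
          - fderiv ℝ Q pr0 u * fderiv ℝ Q pr0 (e i)) / Q pr0 ^ 2 := by
    intro i
    rw [hlogf, Dv_div ((Dv_smooth hQ u).differentiable (by simp)).differentiableAt (dQ pr0)
      (hQ0 pr0) (e i)]
  simp only [hscore]
  -- pure algebra with sums
  rw [Finset.sum_mul, Finset.sum_mul, ← Finset.sum_sub_distrib, Finset.sum_div,
    Finset.sum_div, ← Finset.sum_add_distrib]
  refine Finset.sum_congr rfl fun i _ => ?_
  have hc := hQ0 pr0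
  field_simp
  ring

end Aux

-- [pdv conversion lemmas as in t3]

lemma update_eq_line {n : ℕ} (x : Fin n → ℝ) (i : Fin n) (t : ℝ) :
    Function.update x i t = x + (t - x i) • (Pi.single i (1:ℝ) : Fin n → ℝ) := by
  funext j
  rcases eq_or_ne j i with h | h
  · subst h; simp
  · simp [Function.update_of_ne h, Pi.single_apply, h]

lemma pdv_eq_fst {d p : ℕ} {Φ : (Fin d → ℝ) × (Fin p → ℝ) → ℝ} {a : Fin d → ℝ}
    {b : Fin p → ℝ} (h : DifferentiableAt ℝ Φ (a, b)) (k : Fin d) :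
    pdv k (fun θ => Φ (θ, b)) a
      = fderiv ℝ Φ (a, b) ((Pi.single k 1 : Fin d → ℝ), (0 : Fin p → ℝ)) := by
  set v : (Fin d → ℝ) × (Fin p → ℝ) := ((Pi.single k 1 : Fin d → ℝ), (0 : Fin p → ℝ))
  have hpath : ∀ t : ℝ, ((Function.update a k t, b) : (Fin d → ℝ) × (Fin p → ℝ))
      = (a, b) + (t - a k) • v := by
    intro t
    have := update_eq_line a k t
    ext j
    · simp [this, v]
    · simp [v]
  have h1 : HasDerivAt (fun t : ℝ => t - a k) 1 (a k) := (hasDerivAt_id _).sub_const _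
  have hline : HasDerivAt (fun t : ℝ => (a, b) + (t - a k) • v) v (a k) := by
    simpa using (h1.smul_const v).const_add ((a, b))
  have hF : HasFDerivAt Φ (fderiv ℝ Φ (a, b)) ((fun t : ℝ => (a, b) + (t - a k) • v) (a k)) := by
    simpa using h.hasFDerivAt
  have hcomp := hF.comp_hasDerivAt (a k) hline
  unfold pdv
  simp only [hpath]
  exact hcomp.deriv

lemma pdv_eq_snd {d p : ℕ} {Φ : (Fin d → ℝ) × (Fin p → ℝ) → ℝ} {a : Fin d → ℝ}
    {b : Fin p → ℝ} (h : DifferentiableAt ℝ Φ (a, b)) (i : Fin p) :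
    pdv i (fun y => Φ (a, y)) b
      = fderiv ℝ Φ (a, b) ((0 : Fin d → ℝ), (Pi.single i 1 : Fin p → ℝ)) := by
  set v : (Fin d → ℝ) × (Fin p → ℝ) := ((0 : Fin d → ℝ), (Pi.single i 1 : Fin p → ℝ))
  have hpath : ∀ t : ℝ, ((a, Function.update b i t) : (Fin d → ℝ) × (Fin p → ℝ))
      = (a, b) + (t - b i) • v := by
    intro t
    have := update_eq_line b i t
    ext j
    · simp [v]
    · simp [this, v]
  have h1 : HasDerivAt (fun t : ℝ => t - b i) 1 (b i) := (hasDerivAt_id _).sub_const _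
  have hline : HasDerivAt (fun t : ℝ => (a, b) + (t - b i) • v) v (b i) := by
    simpa using (h1.smul_const v).const_add ((a, b))
  have hF : HasFDerivAt Φ (fderiv ℝ Φ (a, b)) ((fun t : ℝ => (a, b) + (t - b i) • v) (b i)) := by
    simpa using h.hasFDerivAt
  have hcomp := hF.comp_hasDerivAt (b i) hline
  unfold pdv
  simp only [hpath]
  exact hcomp.deriv


variable {d p : ℕ}

/-- The key pointwise identity. -/
lemma key_pointwise (q : (Fin d → ℝ) → (Fin p → ℝ) → ℝ)
    (hpos : ∀ θ x, 0 < q θ x)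
    (hsmooth : ContDiff ℝ (⊤ : ℕ∞) (fun pr : (Fin d → ℝ) × (Fin p → ℝ) => q pr.1 pr.2))
    (f : (Fin d → ℝ) → (Fin p → ℝ) → (Fin p → ℝ))
    (hf : ContDiff ℝ (⊤ : ℕ∞) (fun pr : (Fin d → ℝ) × (Fin p → ℝ) => f pr.1 pr.2))
    (θs : Fin d → ℝ) (k : Fin d) (x : Fin p → ℝ) :
    pdv k (fun θ' => stein (q θ') (f θ') x) θs
      = stein (q θs) (fun y i => pdv k (fun θ' => f θ' y i) θs) x
        + ∑ i, f θs x i * scoreGrad q θs k x i := by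
  set u : (Fin d → ℝ) × (Fin p → ℝ) := ((Pi.single k 1 : Fin d → ℝ), (0 : Fin p → ℝ)) with hu
  set e : Fin p → (Fin d → ℝ) × (Fin p → ℝ) :=
    fun i => ((0 : Fin d → ℝ), (Pi.single i (1 : ℝ) : Fin p → ℝ)) with he
  have hQ : ContDiff ℝ (⊤ : ℕ∞) (fun pr : (Fin d → ℝ) × (Fin p → ℝ) => q pr.1 pr.2) := hsmooth
  have hFi : ∀ i, ContDiff ℝ (⊤ : ℕ∞) (fun pr : (Fin d → ℝ) × (Fin p → ℝ) => f pr.1 pr.2 i) :=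
    fun i => contDiff_pi.1 hf i
  have hQ0 : ∀ pr : (Fin d → ℝ) × (Fin p → ℝ), q pr.1 pr.2 ≠ 0 :=
    fun pr => (hpos pr.1 pr.2).ne'
  have hLQ : ContDiff ℝ (⊤ : ℕ∞) (fun pr : (Fin d → ℝ) × (Fin p → ℝ) => Real.log (q pr.1 pr.2)) :=
    hQ.log hQ0
  have hQF : ∀ i, ContDiff ℝ (⊤ : ℕ∞)
      (fun pr : (Fin d → ℝ) × (Fin p → ℝ) => q pr.1 pr.2 * f pr.1 pr.2 i) :=
    fun i => hQ.mul (hFi i)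
  -- rewrite the LHS
  have hstein : ∀ θ' x', stein (q θ') (f θ') x'
      = (∑ i, fderiv ℝ (fun pr' : (Fin d → ℝ) × (Fin p → ℝ) => q pr'.1 pr'.2 * f pr'.1 pr'.2 i)
          (θ', x') (e i)) / q θ' x' := by
    intro θ' x'
    unfold stein divv
    congr 1
    exact Finset.sum_congr rfl fun i _ =>
      pdv_eq_snd (((hQF i).differentiable (by simp)).differentiableAt) i
  have hSdiff : DifferentiableAt ℝ
      (fun pr : (Fin d → ℝ) × (Fin p → ℝ) =>
        (∑ i, fderiv ℝ (fun pr' : (Fin d → ℝ) × (Fin p → ℝ) => q pr'.1 pr'.2 * f pr'.1 pr'.2 i)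
          pr (e i)) / q pr.1 pr.2) (θs, x) :=
    (((ContDiff.sum (fun i _ => Dv_smooth (hQF i) (e i))).contDiffAt.div
      hQ.contDiffAt (hQ0 (θs, x))).differentiableAt (by simp))
  have hL : pdv k (fun θ' => stein (q θ') (f θ') x) θs
      = fderiv ℝ (fun pr : (Fin d → ℝ) × (Fin p → ℝ) =>
          (∑ i, fderiv ℝ (fun pr' : (Fin d → ℝ) × (Fin p → ℝ) => q pr'.1 pr'.2 * f pr'.1 pr'.2 i)
            pr (e i)) / q pr.1 pr.2) (θs, x) u := by
    have h1 : (fun θ' => stein (q θ') (f θ') x)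
        = fun θ' => (fun pr : (Fin d → ℝ) × (Fin p → ℝ) =>
            (∑ i, fderiv ℝ (fun pr' : (Fin d → ℝ) × (Fin p → ℝ) =>
              q pr'.1 pr'.2 * f pr'.1 pr'.2 i) pr (e i)) / q pr.1 pr.2) (θ', x) :=
      funext fun θ' => hstein θ' x
    rw [h1]
    exact pdv_eq_fst hSdiff k
  -- rewrite the stein term on the RHS
  have hg : ∀ (y : Fin p → ℝ) (i : Fin p), pdv k (fun θ' => f θ' y i) θs
      = fderiv ℝ (fun pr : (Fin d → ℝ) × (Fin p → ℝ) => f pr.1 pr.2 i) (θs, y) u :=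
    fun y i => pdv_eq_fst (((hFi i).differentiable (by simp)).differentiableAt) k
  have hsteinR : stein (q θs) (fun y i => pdv k (fun θ' => f θ' y i) θs) x
      = (∑ i, fderiv ℝ (fun pr : (Fin d → ℝ) × (Fin p → ℝ) =>
          q pr.1 pr.2 * fderiv ℝ (fun pr' : (Fin d → ℝ) × (Fin p → ℝ) => f pr'.1 pr'.2 i) pr u)
          (θs, x) (e i)) / q θs x := by
    unfold stein divv
    congr 1
    refine Finset.sum_congr rfl fun i _ => ?_
    have h1 : (fun y => q θs y * pdv k (fun θ' => f θ' y i) θs)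
        = fun y => (fun pr : (Fin d → ℝ) × (Fin p → ℝ) =>
            q pr.1 pr.2 * fderiv ℝ (fun pr' : (Fin d → ℝ) × (Fin p → ℝ) => f pr'.1 pr'.2 i) pr u)
            (θs, y) := funext fun y => by rw [hg y i]
    rw [h1]
    exact pdv_eq_snd (((hQ.mul (Dv_smooth (hFi i) u)).differentiable (by simp)).differentiableAt) i
  -- rewrite the score term
  have hscore : ∀ i : Fin p, scoreGrad q θs k x i
      = fderiv ℝ (fun pr : (Fin d → ℝ) × (Fin p → ℝ) =>
          fderiv ℝ (fun pr' : (Fin d → ℝ) × (Fin p → ℝ) => Real.log (q pr'.1 pr'.2)) pr u)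
          (θs, x) (e i) := by
    intro i
    show pdv i (fun z => pdv k (fun θ' => Real.log (q θ' z)) θs) x = _
    have h1 : (fun z => pdv k (fun θ' => Real.log (q θ' z)) θs)
        = fun z => (fun pr : (Fin d → ℝ) × (Fin p → ℝ) =>
            fderiv ℝ (fun pr' : (Fin d → ℝ) × (Fin p → ℝ) => Real.log (q pr'.1 pr'.2)) pr u)
            (θs, z) :=
      funext fun z => pdv_eq_fst ((hLQ.differentiable (by simp)).differentiableAt) k
    rw [h1]
    exact pdv_eq_snd (((Dv_smooth hLQ u).differentiable (by simp)).differentiableAt) i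
  rw [hL, hsteinR]
  simp only [hscore]
  exact core (fun pr : (Fin d → ℝ) × (Fin p → ℝ) => q pr.1 pr.2)
    (fun i pr => f pr.1 pr.2 i) hQ hFi hQ0 (θs, x) u e

lemma scoreGrad_smooth (q : (Fin d → ℝ) → (Fin p → ℝ) → ℝ)
    (hpos : ∀ θ x, 0 < q θ x)
    (hsmooth : ContDiff ℝ (⊤ : ℕ∞) (fun pr : (Fin d → ℝ) × (Fin p → ℝ) => q pr.1 pr.2)) (j : Fin d) :
    ContDiff ℝ (⊤ : ℕ∞) (fun pr : (Fin d → ℝ) × (Fin p → ℝ) => scoreGrad q pr.1 j pr.2) := by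
  have hQ0 : ∀ pr : (Fin d → ℝ) × (Fin p → ℝ), q pr.1 pr.2 ≠ 0 :=
    fun pr => (hpos pr.1 pr.2).ne'
  have hLQ : ContDiff ℝ (⊤ : ℕ∞) (fun pr : (Fin d → ℝ) × (Fin p → ℝ) => Real.log (q pr.1 pr.2)) :=
    hsmooth.log hQ0
  refine contDiff_pi.2 fun i => ?_
  have heq : (fun pr : (Fin d → ℝ) × (Fin p → ℝ) => scoreGrad q pr.1 j pr.2 i)
      = fun pr : (Fin d → ℝ) × (Fin p → ℝ) =>
          fderiv ℝ (fun pr2 : (Fin d → ℝ) × (Fin p → ℝ) =>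
            fderiv ℝ (fun pr' : (Fin d → ℝ) × (Fin p → ℝ) => Real.log (q pr'.1 pr'.2)) pr2
              ((Pi.single j 1 : Fin d → ℝ), (0 : Fin p → ℝ))) pr
            ((0 : Fin d → ℝ), (Pi.single i (1 : ℝ) : Fin p → ℝ)) := by
    funext pr
    obtain ⟨a, b⟩ := pr
    show pdv i (fun z => pdv j (fun θ' => Real.log (q θ' z)) a) b = _
    have h1 : (fun z => pdv j (fun θ' => Real.log (q θ' z)) a)
        = fun z => (fun pr2 : (Fin d → ℝ) × (Fin p → ℝ) =>
            fderiv ℝ (fun pr' : (Fin d → ℝ) × (Fin p → ℝ) => Real.log (q pr'.1 pr'.2)) pr2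
              ((Pi.single j 1 : Fin d → ℝ), (0 : Fin p → ℝ))) (a, z) :=
      funext fun z => pdv_eq_fst ((hLQ.differentiable (by simp)).differentiableAt) j
    rw [h1]
    exact pdv_eq_snd
      (((Dv_smooth hLQ _).differentiable (by simp)).differentiableAt) i
  rw [heq]
  exact Dv_smooth (Dv_smooth hLQ _) _

lemma main_int (q : (Fin d → ℝ) → (Fin p → ℝ) → ℝ)
    (hpos : ∀ θ x, 0 < q θ x)
    (hsmooth : ContDiff ℝ (⊤ : ℕ∞) (fun pr : (Fin d → ℝ) × (Fin p → ℝ) => q pr.1 pr.2))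
    (f : (Fin d → ℝ) → (Fin p → ℝ) → (Fin p → ℝ))
    (hf : ContDiff ℝ (⊤ : ℕ∞) (fun pr : (Fin d → ℝ) × (Fin p → ℝ) => f pr.1 pr.2))
    (θs : Fin d → ℝ) (k : Fin d)
    (h0 : ∫ x, q θs x * stein (q θs) (fun y i => pdv k (fun θ' => f θ' y i) θs) x = 0)
    (hint1 : Integrable (fun x => q θs x * pdv k (fun θ' => stein (q θ') (f θ') x) θs))
    (hint2 : Integrable (fun x => q θs x * ∑ i, f θs x i * scoreGrad q θs k x i)) :
    ∫ x, q θs x * pdv k (fun θ' => stein (q θ') (f θ') x) θs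
      = ∫ x, q θs x * ∑ i, f θs x i * scoreGrad q θs k x i := by
  have hpt : ∀ x, q θs x * pdv k (fun θ' => stein (q θ') (f θ') x) θs
      = q θs x * stein (q θs) (fun y i => pdv k (fun θ' => f θ' y i) θs) x
        + q θs x * ∑ i, f θs x i * scoreGrad q θs k x i := fun x => by
    rw [key_pointwise q hpos hsmooth f hf θs k x]; ring
  have hA : Integrable (fun x =>
      q θs x * stein (q θs) (fun y i => pdv k (fun θ' => f θ' y i) θs) x) := by
    refine (hint1.sub hint2).congr (Filter.Eventually.of_forall fun x => ?_)
    have := hpt x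
    simp only [Pi.sub_apply]
    linarith
  calc ∫ x, q θs x * pdv k (fun θ' => stein (q θ') (f θ') x) θs
      = ∫ x, (q θs x * stein (q θs) (fun y i => pdv k (fun θ' => f θ' y i) θs) x
        + q θs x * ∑ i, f θs x i * scoreGrad q θs k x i) :=
        integral_congr_ae (Filter.Eventually.of_forall hpt)
    _ = _ := by rw [integral_add hA hint2, h0, zero_add]


/-- `E_{θ*}[∂_{θₖ}(A_θ f_{θ,j})|_{θ*}] = E_{θ*}[⟨f_{θ*,j}, ∇ₓ∂_{θₖ} log q_{θ*}⟩]`,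
and in particular the matrix `G` with entries `G_{jk} = E_{θ*}[∂_{θₖ} A_θ(∇ₓ∂_{θⱼ} log q_θ)|_{θ*}]`
is the Gram matrix of the gradients of the Fisher score functions. -/
theorem stmt2 {d p : ℕ} (Θ : Set (Fin d → ℝ)) (hΘ : IsOpen Θ)
    (q : (Fin d → ℝ) → (Fin p → ℝ) → ℝ)
    (hpos : ∀ θ x, 0 < q θ x)
    (hsmooth : ContDiff ℝ (⊤ : ℕ∞) (fun pr : (Fin d → ℝ) × (Fin p → ℝ) => q pr.1 pr.2))
    (f : Fin d → (Fin d → ℝ) → (Fin p → ℝ) → (Fin p → ℝ))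
    (hf : ∀ j, ContDiff ℝ (⊤ : ℕ∞) (fun pr : (Fin d → ℝ) × (Fin p → ℝ) => f j pr.1 pr.2))
    (θs : Fin d → ℝ) (hθs : θs ∈ Θ) (k : Fin d)
    -- `E_{θ*}[A_{θ*}(∂_{θₖ} f_{θ,j}|_{θ*})] = 0`
    (h0 : ∀ j, ∫ x, q θs x * stein (q θs) (fun y i => pdv k (fun θ' => f j θ' y i) θs) x = 0)
    -- integrability of the two relevant functions
    (hint1 : ∀ j, Integrable (fun x => q θs x * pdv k (fun θ' => stein (q θ') (f j θ') x) θs))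
    (hint2 : ∀ j, Integrable (fun x =>
        q θs x * ∑ i, f j θs x i * scoreGrad q θs k x i))
    -- the same assumptions for the score-matching test functions `f_{θ,j} = ∇ₓ∂_{θⱼ} log q_θ`
    (hs0 : ∀ j, ∫ x, q θs x *
        stein (q θs) (fun y i => pdv k (fun θ' => scoreGrad q θ' j y i) θs) x = 0)
    (hs1 : ∀ j, Integrable (fun x =>
        q θs x * pdv k (fun θ' => stein (q θ') (scoreGrad q θ' j) x) θs))
    (hs2 : ∀ j, Integrable (fun x =>
        q θs x * ∑ i, scoreGrad q θs j x i * scoreGrad q θs k x i))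
    (G : Matrix (Fin d) (Fin d) ℝ)
    (hG : ∀ j, G j k = ∫ x, q θs x * pdv k (fun θ' => stein (q θ') (scoreGrad q θ' j) x) θs) :
    (∀ j, ∫ x, q θs x * pdv k (fun θ' => stein (q θ') (f j θ') x) θs
        = ∫ x, q θs x * ∑ i, f j θs x i * scoreGrad q θs k x i)
    ∧ (∀ j, G j k = ∫ x, q θs x * ∑ i, scoreGrad q θs j x i * scoreGrad q θs k x i) := by
  constructor
  · intro j
    exact main_int q hpos hsmooth (f j) (hf j) θs k (h0 j) (hint1 j) (hint2 j)
  · intro j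
    rw [hG j]
    exact main_int q hpos hsmooth (fun θ' => scoreGrad q θ' j)
      (scoreGrad_smooth q hpos hsmooth j) θs k (hs0 j) (hs1 j) (hs2 j)
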